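/- arXiv:2010.09884 — 3 statements merged into one kernel-verified Lean document; each statement's English description precedes it below -/
import Mathlib

section
/- Let α be a linear order, let m ≥ 1, and let A : Fin m → Fin 5 → α describe m groups of 5 elements each (so n = 5m elements in total, counted with multiplicity by their positions). For each i, let med i : α satisfy: at least 3 indices j ∈ Fin 5 have A i j ≤ med i, and at least 3 indices j have med i ≤ A i j. Let p : α satisfy: at least ⌈m/2⌉ indices i have med i ≤ p, and at least ⌈m/2⌉ indices i have p ≤ med i. Then the number of pairs (i, j) with A i j ≤ p is at least 3 · (⌈n/10⌉ − 1), and the number of pairs (i, j) with p ≤ A i j is at least 3 · (⌈n/10⌉ − 1). -/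
/-!
At least `⌈m/2⌉` groups have their median `≤ p`, and each of them contributes at least three
elements `≤` its median, hence `≤ p`; as `⌈5m/10⌉ = ⌈m/2⌉` this gives the first bound. The second
is the same count in the order dual `αᵒᵈ`.
-/

open Finset

theorem card_filter_prod_eq_sum {ι κ : Type*} [Fintype ι] [Fintype κ]
    (Q : ι × κ → Prop) [DecidablePred Q] :
    #{ij | Q ij} = ∑ i, #{j | Q (i, j)} := by
  rw [card_filter, Fintype.sum_prod_type]
  exact sum_congr rfl fun i _ => (card_filter _ _).symm

theorem mul_card_le_card_filter_le {ι κ α : Type*} [Fintype ι] [Fintype κ] [Preorder α]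
    [DecidableLE α] (A : ι → κ → α) (med : ι → α) (p : α) (k : ℕ)
    (hmed : ∀ i, k ≤ #{j | A i j ≤ med i}) :
    k * #{i | med i ≤ p} ≤ #{ij : ι × κ | A ij.1 ij.2 ≤ p} := by
  rw [card_filter_prod_eq_sum]
  calc k * #{i | med i ≤ p} = ∑ i ∈ {i | med i ≤ p}, k := by
        rw [sum_const, smul_eq_mul, mul_comm]
    _ ≤ ∑ i ∈ {i | med i ≤ p}, #{j | A i j ≤ p} := by
        refine sum_le_sum fun i hi => (hmed i).trans (card_le_card fun j hj => ?_)
        simp only [mem_filter, mem_univ, true_and] at hi hj ⊢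
        exact hj.trans hi
    _ ≤ ∑ i, #{j | A i j ≤ p} := sum_le_sum_of_subset (subset_univ _)

theorem median_of_medians_pivot_general
    {α : Type*} [LinearOrder α]
    (m : ℕ) (n : ℕ) (hn : n = 5 * m)
    (A : Fin m → Fin 5 → α) (med : Fin m → α)
    (hmed_le : ∀ i, 3 ≤ (Finset.univ.filter (fun j : Fin 5 => A i j ≤ med i)).card)
    (hmed_ge : ∀ i, 3 ≤ (Finset.univ.filter (fun j : Fin 5 => med i ≤ A i j)).card)
    (p : α)
    (hp_le : ⌈(m : ℚ) / 2⌉₊ ≤ (Finset.univ.filter (fun i : Fin m => med i ≤ p)).card)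
    (hp_ge : ⌈(m : ℚ) / 2⌉₊ ≤ (Finset.univ.filter (fun i : Fin m => p ≤ med i)).card) :
    3 * (⌈(n : ℚ) / 10⌉₊ - 1) ≤
        (Finset.univ.filter (fun ij : Fin m × Fin 5 => A ij.1 ij.2 ≤ p)).card ∧
      3 * (⌈(n : ℚ) / 10⌉₊ - 1) ≤
        (Finset.univ.filter (fun ij : Fin m × Fin 5 => p ≤ A ij.1 ij.2)).card := by
  have hceil : ⌈(n : ℚ) / 10⌉₊ = ⌈(m : ℚ) / 2⌉₊ := by
    subst hn
    congr 1
    push_cast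
    ring
  have hbound {c : ℕ} (hc : ⌈(m : ℚ) / 2⌉₊ ≤ c) : 3 * (⌈(n : ℚ) / 10⌉₊ - 1) ≤ 3 * c := by
    rw [hceil]
    exact Nat.mul_le_mul_left 3 ((Nat.sub_le _ _).trans hc)
  exact ⟨(hbound hp_le).trans (mul_card_le_card_filter_le A med p 3 hmed_le),
    (hbound hp_ge).trans (mul_card_le_card_filter_le (α := αᵒᵈ) A med p 3 hmed_ge)⟩

/-- Correctness of the median-of-medians pivot: given `m ≥ 1` groups of 5
elements, medians `med i` of each group, and a median `p` of the medians, at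
least `3·(⌈n/10⌉ − 1)` of the `n = 5m` elements are `≤ p` and at least
`3·(⌈n/10⌉ − 1)` of them are `≥ p`. -/
theorem median_of_medians_pivot
    {α : Type*} [LinearOrder α]
    (m : ℕ) (hm : 1 ≤ m) (n : ℕ) (hn : n = 5 * m)
    (A : Fin m → Fin 5 → α) (med : Fin m → α)
    (hmed_le : ∀ i, 3 ≤ (Finset.univ.filter (fun j : Fin 5 => A i j ≤ med i)).card)
    (hmed_ge : ∀ i, 3 ≤ (Finset.univ.filter (fun j : Fin 5 => med i ≤ A i j)).card)
    (p : α)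
    (hp_le : ⌈(m : ℚ) / 2⌉₊ ≤ (Finset.univ.filter (fun i : Fin m => med i ≤ p)).card)
    (hp_ge : ⌈(m : ℚ) / 2⌉₊ ≤ (Finset.univ.filter (fun i : Fin m => p ≤ med i)).card) :
    3 * (⌈(n : ℚ) / 10⌉₊ - 1) ≤
        (Finset.univ.filter (fun ij : Fin m × Fin 5 => A ij.1 ij.2 ≤ p)).card ∧
      3 * (⌈(n : ℚ) / 10⌉₊ - 1) ≤
        (Finset.univ.filter (fun ij : Fin m × Fin 5 => p ≤ A ij.1 ij.2)).card :=
  median_of_medians_pivot_general m n hn A med hmed_le hmed_ge p hp_le hp_ge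
end

section
/- There exists an absolute constant C > 0 with the following property. Let a > 0 be a real number and let T : ℕ → ℕ → ℝ satisfy: (i) T(1, K) ≤ a for all K; (ii) T(n, K) ≤ a·n for all n ≥ 1 and all K ≤ 2; (iii) for all n ≥ 2 and K ≥ 3, T(n, K) ≤ T(⌈n/2⌉, min(K, ⌈n/2⌉)) + T(⌈n/2⌉, min(⌈K/2⌉, ⌈n/2⌉)) + a·n. Then for all n ≥ 1 and all K with 2 ≤ K ≤ n, T(n, K) ≤ C · a · n · (1 + log₂ K), where log₂ denotes the real base-2 logarithm. -/
/-!
By strong induction on `n`, `T n K ≤ a * (8 (n - 1) (1 + log₂ K) + n)` whenever `2 ≤ K ≤ n`.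
In the recursive step both halves have size `m = ⌈n/2⌉ ≥ 2`; the good half has `log₂` of its key
count smaller by at least `1/2` (as `2 ⌈K/2⌉² ≤ K²` for `K ≥ 3`), which saves `4 (m - 1) ≥ 2m`
and pays for the two linear terms `m`, while the factor `n - 1` instead of `n` absorbs the
rounding `2 ⌈n/2⌉ ≤ n + 1`.
-/

open Real

theorem Nat.ceil_natCast_div_two {α : Type*} [Field α] [LinearOrder α] [IsStrictOrderedRing α]
    [FloorSemiring α] (n : ℕ) : ⌈(n : α) / 2⌉₊ = (n + 1) / 2 := by
  apply le_antisymm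
  · rw [Nat.ceil_le, div_le_iff₀ two_pos]
    exact_mod_cast (by omega : n ≤ (n + 1) / 2 * 2)
  · have h : (n : α) ≤ ⌈(n : α) / 2⌉₊ * 2 := (div_le_iff₀ two_pos).1 (Nat.le_ceil _)
    have : n ≤ ⌈(n : α) / 2⌉₊ * 2 := by exact_mod_cast h
    omega

theorem two_mul_sq_le_sq_of_le_half_succ {j K : ℕ} (hK : 3 ≤ K) (hj : j ≤ (K + 1) / 2) :
    2 * j ^ 2 ≤ K ^ 2 := by
  have : 2 * j ≤ K + 1 := by omega
  nlinarith

theorem logb_two_add_half_le_of_two_mul_sq_le {x y : ℝ} (hx : 0 < x) (hxy : 2 * x ^ 2 ≤ y ^ 2) :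
    logb 2 x + 1 / 2 ≤ logb 2 y := by
  have hmono : logb 2 (2 * x ^ 2) ≤ logb 2 (y ^ 2) :=
    (logb_le_logb one_lt_two (by positivity)
      ((by positivity : (0 : ℝ) < 2 * x ^ 2).trans_le hxy)).2 hxy
  rw [logb_mul two_ne_zero (by positivity), logb_self_eq_one one_lt_two, logb_pow,
    logb_pow] at hmono
  push_cast at hmono
  linarith

noncomputable def sortingBound (n K : ℕ) : ℝ := 8 * ((n : ℝ) - 1) * (1 + logb 2 K) + n

theorem natCast_le_sortingBound {n K : ℕ} (hn : 1 ≤ n) (hK : 1 ≤ K) :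
    (n : ℝ) ≤ sortingBound n K := by
  have : (1 : ℝ) ≤ n := by exact_mod_cast hn
  have : 0 ≤ logb 2 K := logb_nonneg one_lt_two (by exact_mod_cast hK)
  unfold sortingBound
  nlinarith

theorem sortingBound_le {n K : ℕ} (hK : 1 ≤ K) :
    sortingBound n K ≤ 9 * n * (1 + logb 2 K) := by
  have : 0 ≤ logb 2 K := logb_nonneg one_lt_two (by exact_mod_cast hK)
  unfold sortingBound
  nlinarith [(Nat.cast_nonneg n : (0 : ℝ) ≤ n)]

theorem sortingBound_add_sortingBound_add_le {m n K K₁ K₂ : ℕ} (hm : 2 ≤ m)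
    (hmn : 2 * m ≤ n + 1) (hK₁ : 1 ≤ K₁) (hK₁K : K₁ ≤ K) (hK₂ : 1 ≤ K₂)
    (hK₂K : 2 * K₂ ^ 2 ≤ K ^ 2) :
    sortingBound m K₁ + sortingBound m K₂ + n ≤ sortingBound n K := by
  have hL₁ : logb 2 K₁ ≤ logb 2 K :=
    logb_le_logb_of_le one_lt_two (by exact_mod_cast hK₁) (by exact_mod_cast hK₁K)
  have hL₂ : logb 2 K₂ + 1 / 2 ≤ logb 2 K :=
    logb_two_add_half_le_of_two_mul_sq_le (by exact_mod_cast hK₂) (by exact_mod_cast hK₂K)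
  have hL₂_nonneg : 0 ≤ logb 2 K₂ := logb_nonneg one_lt_two (by exact_mod_cast hK₂)
  have hm' : (2 : ℝ) ≤ m := by exact_mod_cast hm
  have hmn' : 2 * (m : ℝ) ≤ n + 1 := by exact_mod_cast hmn
  unfold sortingBound
  nlinarith [mul_le_mul_of_nonneg_left hL₁ (by linarith : (0 : ℝ) ≤ m - 1),
    mul_le_mul_of_nonneg_left hL₂ (by linarith : (0 : ℝ) ≤ m - 1),
    mul_le_mul_of_nonneg_right hmn' (by linarith : (0 : ℝ) ≤ 1 + logb 2 K)]

theorem le_mul_sortingBound {a : ℝ} {T : ℕ → ℕ → ℝ} (ha : 0 ≤ a)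
    (hbase : ∀ n ≥ 1, ∀ K ≤ 2, T n K ≤ a * n)
    (hrec : ∀ n, 2 ≤ n → ∀ K, 3 ≤ K →
      T n K ≤ T ⌈(n : ℚ) / 2⌉₊ (min K ⌈(n : ℚ) / 2⌉₊)
        + T ⌈(n : ℚ) / 2⌉₊ (min ⌈(K : ℚ) / 2⌉₊ ⌈(n : ℚ) / 2⌉₊) + a * n)
    {n K : ℕ} (hK : 2 ≤ K) (hKn : K ≤ n) : T n K ≤ a * sortingBound n K := by
  induction n using Nat.strong_induction_on generalizing K with
  | _ n ih =>
    rcases le_or_gt K 2 with hK2 | hK3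
    · exact (hbase n (by omega) K hK2).trans
        (mul_le_mul_of_nonneg_left (natCast_le_sortingBound (by omega) (by omega)) ha)
    · have hsplit := hrec n (by omega) K hK3
      simp only [Nat.ceil_natCast_div_two] at hsplit
      set m := (n + 1) / 2
      have h₁ := ih m (by omega) (K := min K m) (by omega) (min_le_right _ _)
      have h₂ := ih m (by omega) (K := min ((K + 1) / 2) m) (by omega) (min_le_right _ _)
      have hstep := sortingBound_add_sortingBound_add_le (m := m) (n := n) (K := K)
        (K₁ := min K m) (K₂ := min ((K + 1) / 2) m) (by omega) (by omega) (by omega)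
        (min_le_left _ _) (by omega) (two_mul_sq_le_sq_of_le_half_succ hK3 (by omega))
      have := mul_le_mul_of_nonneg_left hstep ha
      rw [mul_add, mul_add] at this
      linarith

/-- The sorting recurrence `T(n,K) ≤ T(⌈n/2⌉, min(K,⌈n/2⌉)) + T(⌈n/2⌉, min(⌈K/2⌉,⌈n/2⌉)) + a·n`
with base cases `T(1,K) ≤ a` and `T(n,K) ≤ a·n` for `K ≤ 2` solves to
`T(n,K) = O(a · n · log K)`. -/
theorem sorting_recurrence :
    ∃ C : ℝ, 0 < C ∧
      ∀ (a : ℝ) (T : ℕ → ℕ → ℝ), 0 < a →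
        (∀ K, T 1 K ≤ a) →
        (∀ n ≥ 1, ∀ K ≤ 2, T n K ≤ a * n) →
        (∀ n, 2 ≤ n → ∀ K, 3 ≤ K →
          T n K ≤ T ⌈(n : ℚ) / 2⌉₊ (min K ⌈(n : ℚ) / 2⌉₊)
                  + T ⌈(n : ℚ) / 2⌉₊ (min ⌈(K : ℚ) / 2⌉₊ ⌈(n : ℚ) / 2⌉₊)
                  + a * n) →
        ∀ n ≥ 1, ∀ K, 2 ≤ K → K ≤ n →
          T n K ≤ C * a * n * (1 + Real.logb 2 K) := by
  refine ⟨9, by norm_num, fun a T ha _ hbase hrec n _ K hK hKn => ?_⟩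
  calc T n K ≤ a * sortingBound n K := le_mul_sortingBound ha.le hbase hrec hK hKn
    _ ≤ a * (9 * n * (1 + logb 2 K)) :=
      mul_le_mul_of_nonneg_left (sortingBound_le (by omega)) ha.le
    _ = 9 * a * n * (1 + logb 2 K) := by ring
end

section
/- Let k, n, t be natural numbers with 2^k dividing n and 2^k ≥ 1. Let S be a finite subset of Fin n, and let Bad : Fin n → Finset (Fin 2^k) be such that (Bad v).card ≤ t for every v ∈ S. Then there exists a function φ : Fin n → Fin 2^k such that every fiber has cardinality exactly n/2^k (i.e. for every key j, the number of v with φ v = j equals n/2^k), and moreover 2^k · (number of v ∈ S with φ v ∈ Bad v) ≤ t · (card of S). -/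
/-!
Start from any balanced assignment `ψ` (e.g. `v ↦ v mod 2^k`) and consider its `2^k` shifts
`v ↦ ψ v + c` in the group `Fin (2^k)`. Every shift is again balanced, and for a fixed node `v`
exactly `#(Bad v)` of the shifts give `v` a bad key. Summing over the shifts, the total number of
bad (node, shift) pairs is at most `t * #S`, so some shift has at most a `1/2^k` share of it.
-/

open Finset

theorem Fintype.exists_card_mul_le_sum {ι : Type*} [Fintype ι] [Nonempty ι] (f : ι → ℕ) :
    ∃ i, Fintype.card ι * f i ≤ ∑ j, f j := by
  obtain ⟨i, -, hi⟩ := exists_le_of_sum_le univ_nonempty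
    (f := fun i => Fintype.card ι * f i) (g := fun _ => ∑ j, f j) (by simp [← mul_sum])
  exact ⟨i, hi⟩

section Shift

variable {α G : Type*} [AddGroup G] [DecidableEq G]

theorem card_filter_add_right_eq [Fintype α] (ψ : α → G) (c j : G) :
    #{v | ψ v + c = j} = #{v | ψ v = j - c} := by
  simp_rw [eq_sub_iff_add_eq]

theorem card_filter_add_left_mem [Fintype G] (x : G) (B : Finset G) : #{c | x + c ∈ B} = #B := by
  rw [← card_vadd_finset (-x) B]
  congr 1
  ext c
  simp [mem_vadd_finset, neg_add_eq_iff_eq_add]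

theorem sum_card_filter_shift_mem [Fintype G] (ψ : α → G) (S : Finset α) (Bad : α → Finset G) :
    ∑ c, #{v ∈ S | ψ v + c ∈ Bad v} = ∑ v ∈ S, #(Bad v) := by
  simp_rw [card_filter]
  rw [sum_comm]
  refine sum_congr rfl fun v _ => ?_
  rw [← card_filter, card_filter_add_left_mem]

theorem exists_shift_card_mul_le [Fintype G] (ψ : α → G) (S : Finset α) (Bad : α → Finset G)
    {t : ℕ} (hBad : ∀ v ∈ S, #(Bad v) ≤ t) :
    ∃ c, Fintype.card G * #{v ∈ S | ψ v + c ∈ Bad v} ≤ t * #S := by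
  have : Nonempty G := ⟨0⟩
  obtain ⟨c, hc⟩ := Fintype.exists_card_mul_le_sum fun c => #{v ∈ S | ψ v + c ∈ Bad v}
  refine ⟨c, hc.trans ?_⟩
  rw [sum_card_filter_shift_mem]
  simpa [mul_comm] using sum_le_sum hBad

end Shift

theorem card_filter_equiv_snd_eq {α β γ : Type*} [Fintype α] [Fintype β] [Fintype γ]
    [DecidableEq γ] (e : α ≃ β × γ) (j : γ) :
    #{a | (e a).2 = j} = Fintype.card β := by
  rw [card_equiv e (t := univ ×ˢ {j})
    (by simp only [mem_filter, mem_univ, true_and, mem_product, mem_singleton, implies_true])]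
  simp

theorem exists_fin_fiber_card_eq_div {n q : ℕ} (hdvd : q ∣ n) :
    ∃ ψ : Fin n → Fin q, ∀ j, #{v | ψ v = j} = n / q := by
  obtain ⟨m, rfl⟩ := hdvd
  let e : Fin (q * m) ≃ Fin m × Fin q := (finCongr (mul_comm q m)).trans finProdFinEquiv.symm
  refine ⟨fun v => (e v).2, fun j => ?_⟩
  rw [card_filter_equiv_snd_eq, Fintype.card_fin, Nat.mul_div_cancel_left _ j.pos]

theorem balanced_key_assignment_exists_general
    (k n t : ℕ) (hdvd : 2 ^ k ∣ n)
    (S : Finset (Fin n)) (Bad : Fin n → Finset (Fin (2 ^ k)))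
    (hBad : ∀ v ∈ S, (Bad v).card ≤ t) :
    ∃ φ : Fin n → Fin (2 ^ k),
      (∀ j : Fin (2 ^ k),
        (Finset.univ.filter (fun v => φ v = j)).card = n / 2 ^ k) ∧
      2 ^ k * (S.filter (fun v => φ v ∈ Bad v)).card ≤ t * S.card := by
  obtain ⟨ψ, hψ⟩ := exists_fin_fiber_card_eq_div hdvd
  obtain ⟨c, hc⟩ := exists_shift_card_mul_le ψ S Bad hBad
  refine ⟨fun v => ψ v + c, fun j => ?_, by simpa using hc⟩
  rw [card_filter_add_right_eq, hψ]

/-- Combinatorial core of Claim 8.2: if for each node `v` in `S` the set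
`Bad v` of bad keys has size at most `t`, then there is a balanced key
assignment `φ` (every key appears exactly `n/2^k` times) under which at most a
`t/2^k` fraction of the nodes in `S` receive a bad key. -/
theorem balanced_key_assignment_exists
    (k n t : ℕ) (hdvd : 2 ^ k ∣ n) (hk : 1 ≤ 2 ^ k)
    (S : Finset (Fin n)) (Bad : Fin n → Finset (Fin (2 ^ k)))
    (hBad : ∀ v ∈ S, (Bad v).card ≤ t) :
    ∃ φ : Fin n → Fin (2 ^ k),
      (∀ j : Fin (2 ^ k),
        (Finset.univ.filter (fun v => φ v = j)).card = n / 2 ^ k) ∧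
      2 ^ k * (S.filter (fun v => φ v ∈ Bad v)).card ≤ t * S.card :=
  balanced_key_assignment_exists_general k n t hdvd S Bad hBad
end
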